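/- For all integers n ≥ r ≥ 1, [p_n^{(r)}]_q = ∑_{j=r}^n (1−q)^{j−r} S_q[j,r] · p_n^{(j)}, where S_q[j,r] are the Carlitz q-Stirling numbers of the second kind. -/

import Mathlib

open MvPolynomial PowerSeries

noncomputable section

/-- The field `ℚ(q)` of rational functions in the indeterminate `q`. -/
abbrev K : Type := RatFunc ℚ

/-- The indeterminate `q` in `ℚ(q)`. -/
def qq : K := RatFunc.X

/-- `[n]_x = 1 + x + ⋯ + x^{n-1}` (so `[0]_x = 0`). -/
def qNat (x : K) (n : ℕ) : K := ∑ i ∈ Finset.range n, x ^ i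

/-- `[n]_x! = [1]_x [2]_x ⋯ [n]_x` (so `[0]_x! = 1`). -/
def qFact (x : K) (n : ℕ) : K := ∏ i ∈ Finset.range n, qNat x (i + 1)

/-- The `q`-binomial coefficient `[n choose k]_x`, equal to
`[n]_x!/([k]_x! [n-k]_x!)` for `n ≥ k ≥ 0` and to `0` otherwise. -/
def qBinom (x : K) (n k : ℕ) : K :=
  if k ≤ n then qFact x n / (qFact x k * qFact x (n - k)) else 0

/-- `p_n^{(r)}`: the sum of the monomial symmetric polynomials `m_λ` over the
partitions `λ` of `n` of length `r` (in `N` variables, over `ℚ(q)`).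
For `r = 0` this automatically gives `δ_{n,0}`. -/
def pnr (N n r : ℕ) : MvPolynomial (Fin N) K :=
  ∑ μ ∈ Finset.univ.filter (fun μ : Nat.Partition n => μ.parts.card = r),
    msymm (Fin N) K μ

/-- `E(t) = ∑_{m ≥ 0} e_m t^m`. -/
def Eser (N : ℕ) : PowerSeries (MvPolynomial (Fin N) K) :=
  PowerSeries.mk fun m => esymm (Fin N) K m

/-- The property of being "the" `q`-derivative operator on power series over
`MvPolynomial (Fin N) ℚ(q)`: `Dq` satisfies `((q−1)·t) · Dq F = F(qt) − F(t)`
for every `F`.  (This characterizes `Dq F = (F(qt) − F(t))/((q−1)t)` uniquely,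
since `(q−1)·t` is a nonzerodivisor.) -/
def IsqDeriv (N : ℕ)
    (Dq : PowerSeries (MvPolynomial (Fin N) K) → PowerSeries (MvPolynomial (Fin N) K)) : Prop :=
  ∀ F, (PowerSeries.C (MvPolynomial.C (qq - 1)) * PowerSeries.X) * Dq F =
    PowerSeries.rescale (MvPolynomial.C qq) F - F

/-- The property that the family `P n r` is the family of `q`-analogs
`[p_n^{(r)}]_q`, i.e. it satisfies the defining generating identity
`[r]_q! · E(t) · ∑_{n≥r} [p_n^{(r)}]_q (−1)^{n−r} t^{n−r} = D_q^r E(t)` for every `r ≥ 0`,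
where `Dq` is the `q`-derivative. -/
def IsqAnalog (N : ℕ)
    (Dq : PowerSeries (MvPolynomial (Fin N) K) → PowerSeries (MvPolynomial (Fin N) K))
    (P : ℕ → ℕ → MvPolynomial (Fin N) K) : Prop :=
  ∀ r : ℕ,
    PowerSeries.C (MvPolynomial.C (qFact qq r)) * Eser N *
        (PowerSeries.mk fun m => (-1 : MvPolynomial (Fin N) K) ^ m * P (m + r) r) =
      Dq^[r] (Eser N)

end

/-- The Carlitz `q`-Stirling numbers of the second kind `S_q[n,k]` (as elements
of `ℚ(q)`): `S_q[0,0] = 1`, `S_q[n,k] = 0` if `k > n` or (`n > 0` and `k = 0`),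
and `S_q[n+1,k+1] = S_q[n,k] + [k+1]_q S_q[n,k+1]`. -/
noncomputable def qStirling2 (x : K) : ℕ → ℕ → K
  | 0, 0 => 1
  | 0, _ + 1 => 0
  | _ + 1, 0 => 0
  | n + 1, k + 1 => qStirling2 x n k + qNat x (k + 1) * qStirling2 x n (k + 1)

/-!
The defining identity determines `P` uniquely, because `[r]_q! · E(t)` has invertible constant
term; so it suffices to show that the right-hand side satisfies it. After multiplying by `t^r`,
the coefficient of `t^n` on the `q`-derivative side is `[n]_q [n-1]_q ⋯ [n-r+1]_q · e_n`. On the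
other side, extracting the coefficient of a monomial `x^α` gives the symmetric-function identity
`∑_{a+k=n} (-1)^k e_a p_k^{(j)} = (-1)^j C(n,j) e_n`: the contributions to `x^α` cancel in pairs
as soon as some exponent of `α` is at least `2`. This leaves the scalar identity
`[r]_q! ∑_j C(n,j) (q-1)^j S_q[j,r] = (q-1)^r [n]_q ⋯ [n-r+1]_q`, which follows by induction on
`n` from Pascal's rule and the recurrence of `S_q`.
-/

open Finset

section QArith

variable (x : K)

noncomputable def qDescFactorial (n r : ℕ) : K := ∏ i ∈ range r, qNat x (n - i)

@[simp] lemma qNat_zero : qNat x 0 = 0 := by simp [qNat]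

lemma qNat_add (a b : ℕ) : qNat x (a + b) = qNat x a + x ^ a * qNat x b := by
  simp only [qNat, sum_range_add, mul_sum, pow_add]

lemma sub_one_mul_qNat (n : ℕ) : (x - 1) * qNat x n = x ^ n - 1 := by
  rw [qNat, mul_comm, geom_sum_mul]

lemma qFact_succ (r : ℕ) : qFact x (r + 1) = qFact x r * qNat x (r + 1) :=
  prod_range_succ _ r

@[simp] lemma qDescFactorial_zero_right (n : ℕ) : qDescFactorial x n 0 = 1 := prod_range_zero _

lemma qDescFactorial_succ_right (n r : ℕ) :
    qDescFactorial x n (r + 1) = qDescFactorial x n r * qNat x (n - r) :=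
  prod_range_succ _ r

lemma qDescFactorial_succ_succ (n r : ℕ) :
    qDescFactorial x (n + 1) (r + 1) = qNat x (n + 1) * qDescFactorial x n r := by
  simp only [qDescFactorial, prod_range_succ', Nat.add_sub_add_right, Nat.sub_zero, mul_comm]

lemma qDescFactorial_eq_zero_of_lt {n r : ℕ} (h : n < r) : qDescFactorial x n r = 0 :=
  prod_eq_zero (mem_range.2 h) (by simp)

lemma qDescFactorial_pascal (n r : ℕ) :
    x ^ (r + 1) * qDescFactorial x n (r + 1) + qNat x (r + 1) * qDescFactorial x n r =
      qDescFactorial x (n + 1) (r + 1) := by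
  rcases lt_or_ge n r with h | h
  · simp [qDescFactorial_eq_zero_of_lt x h, qDescFactorial_eq_zero_of_lt x (Nat.lt_succ_of_lt h),
      qDescFactorial_eq_zero_of_lt x (by omega : n + 1 < r + 1)]
  · have hsplit : qNat x (n + 1) = qNat x (r + 1) + x ^ (r + 1) * qNat x (n - r) := by
      rw [← qNat_add]; congr 1; omega
    rw [qDescFactorial_succ_succ, qDescFactorial_succ_right, hsplit]
    ring

lemma qStirling2_eq_zero_of_lt {j r : ℕ} (h : j < r) : qStirling2 x j r = 0 := by
  induction j generalizing r with
  | zero => obtain ⟨r, rfl⟩ := Nat.exists_eq_succ_of_ne_zero h.ne'; rfl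
  | succ j ih =>
    obtain ⟨r, rfl⟩ := Nat.exists_eq_succ_of_ne_zero (by omega : r ≠ 0)
    simp [qStirling2, ih (by omega : j < r), ih (by omega : j < r + 1)]

lemma sub_one_pow_mul_qStirling2_sign (j r : ℕ) :
    (x - 1) ^ r * ((1 - x) ^ (j - r) * qStirling2 x j r * ((-1) ^ r * (-1) ^ j)) =
      (x - 1) ^ j * qStirling2 x j r := by
  rcases lt_or_ge j r with h | h
  · simp [qStirling2_eq_zero_of_lt x h]
  · obtain ⟨d, rfl⟩ := Nat.exists_eq_add_of_le h
    rw [Nat.add_sub_cancel_left, show 1 - x = (-1) * (x - 1) by ring, mul_pow]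
    ring_nf
    simp only [pow_mul', neg_one_sq, one_pow, mul_one]

lemma sum_choose_mul_qStirling2_zero (n : ℕ) :
    ∑ j ∈ range (n + 1), (n.choose j : K) * (x - 1) ^ j * qStirling2 x j 0 = 1 := by
  rw [sum_range_succ']
  simp [qStirling2]

lemma sum_choose_mul_qStirling2_succ (n r : ℕ) :
    ∑ j ∈ range (n + 2), ((n + 1).choose j : K) * (x - 1) ^ j * qStirling2 x j (r + 1) =
      x ^ (r + 1) * ∑ j ∈ range (n + 1), (n.choose j : K) * (x - 1) ^ j * qStirling2 x j (r + 1) +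
        (x - 1) * ∑ j ∈ range (n + 1), (n.choose j : K) * (x - 1) ^ j * qStirling2 x j r := by
  have h := sum_choose_succ_mul (fun j _ => (x - 1) ^ j * qStirling2 x j (r + 1)) n
  simp only [← mul_assoc] at h
  have hx : x ^ (r + 1) = 1 + (x - 1) * qNat x (r + 1) := by rw [sub_one_mul_qNat]; ring
  rw [h, hx, add_mul, one_mul, add_assoc]
  congr 1
  simp only [mul_sum, ← sum_add_distrib]
  refine sum_congr rfl fun j _ => ?_
  simp only [qStirling2]
  ring

theorem qFact_mul_sum_choose_mul_qStirling2 (n r : ℕ) :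
    qFact x r * ∑ j ∈ range (n + 1), (n.choose j : K) * (x - 1) ^ j * qStirling2 x j r =
      (x - 1) ^ r * qDescFactorial x n r := by
  induction n generalizing r with
  | zero =>
    cases r with
    | zero => simp [qStirling2, qFact]
    | succ r => simp [qStirling2, qDescFactorial_eq_zero_of_lt x (Nat.succ_pos r)]
  | succ n ih =>
    cases r with
    | zero => simp [sum_choose_mul_qStirling2_zero, qFact]
    | succ r =>
      have ih' := ih (r + 1)
      rw [qFact_succ] at ih'
      rw [sum_choose_mul_qStirling2_succ, ← qDescFactorial_pascal, qFact_succ]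
      linear_combination x ^ (r + 1) * ih' + (x - 1) * qNat x (r + 1) * ih r

end QArith

lemma qq_pow_sub_one_ne_zero {k : ℕ} (hk : k ≠ 0) : qq ^ k - 1 ≠ 0 := by
  rw [qq, ← RatFunc.algebraMap_X, ← map_pow, ← map_one (algebraMap (Polynomial ℚ) K), ← map_sub]
  refine RatFunc.algebraMap_ne_zero ?_
  simpa using Polynomial.X_pow_sub_C_ne_zero (Nat.pos_of_ne_zero hk) (1 : ℚ)

lemma qq_sub_one_ne_zero : qq - 1 ≠ 0 := by
  simpa using qq_pow_sub_one_ne_zero one_ne_zero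

lemma qNat_qq_ne_zero {k : ℕ} (hk : k ≠ 0) : qNat qq k ≠ 0 :=
  right_ne_zero_of_mul (a := qq - 1) (by rw [sub_one_mul_qNat]; exact qq_pow_sub_one_ne_zero hk)

lemma qFact_qq_ne_zero (r : ℕ) : qFact qq r ≠ 0 :=
  prod_ne_zero_iff.2 fun i _ => qNat_qq_ne_zero i.succ_ne_zero

lemma qFact_mul_sum_choose_mul_qStirling2_sign (n r : ℕ) :
    qFact qq r * ∑ j ∈ range (n + 1), (n.choose j : K) *
        ((1 - qq) ^ (j - r) * qStirling2 qq j r * ((-1) ^ r * (-1) ^ j)) =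
      qDescFactorial qq n r := by
  refine mul_left_cancel₀ (pow_ne_zero r qq_sub_one_ne_zero) ?_
  rw [← qFact_mul_sum_choose_mul_qStirling2, mul_left_comm]
  congr 1
  rw [mul_sum]
  refine sum_congr rfl fun j _ => ?_
  rw [mul_left_comm, sub_one_pow_mul_qStirling2_sign, mul_assoc]

section QDeriv

variable {N : ℕ} {Dq : PowerSeries (MvPolynomial (Fin N) K) → PowerSeries (MvPolynomial (Fin N) K)}

lemma IsqDeriv.coeff (hDq : IsqDeriv N Dq) (F : PowerSeries (MvPolynomial (Fin N) K)) (m : ℕ) :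
    PowerSeries.coeff m (Dq F) =
      MvPolynomial.C (qNat qq (m + 1)) * PowerSeries.coeff (m + 1) F := by
  have h := congrArg (PowerSeries.coeff (m + 1)) (hDq F)
  rw [mul_assoc, PowerSeries.coeff_C_mul, PowerSeries.coeff_succ_X_mul,
    map_sub (PowerSeries.coeff (m + 1)), PowerSeries.coeff_rescale] at h
  refine mul_left_cancel₀ (MvPolynomial.C_ne_zero.2 qq_sub_one_ne_zero) ?_
  rw [h, ← mul_assoc, ← map_mul, sub_one_mul_qNat, map_sub, map_pow, map_one, sub_mul, one_mul]

lemma IsqDeriv.coeff_X_pow_mul_iterate (hDq : IsqDeriv N Dq) (r n : ℕ)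
    (F : PowerSeries (MvPolynomial (Fin N) K)) :
    PowerSeries.coeff n (PowerSeries.X ^ r * Dq^[r] F) =
      MvPolynomial.C (qDescFactorial qq n r) * PowerSeries.coeff n F := by
  induction r generalizing n F with
  | zero => simp
  | succ r ih =>
    rw [Function.iterate_succ_apply, pow_succ', mul_assoc]
    cases n with
    | zero => simp [qDescFactorial_eq_zero_of_lt _ (Nat.succ_pos r)]
    | succ n =>
      rw [PowerSeries.coeff_succ_X_mul, ih, hDq.coeff, ← mul_assoc, ← map_mul,
        qDescFactorial_succ_succ, mul_comm (qDescFactorial qq n r)]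

lemma IsqAnalog.unique {P P' : ℕ → ℕ → MvPolynomial (Fin N) K} (hP : IsqAnalog N Dq P)
    (hP' : IsqAnalog N Dq P') (m r : ℕ) : P (m + r) r = P' (m + r) r := by
  have hEser : Eser N ≠ 0 := fun h => by
    simpa [Eser] using congrArg (PowerSeries.coeff 0) h
  have hC : PowerSeries.C (MvPolynomial.C (qFact qq r)) ≠
      (0 : PowerSeries (MvPolynomial (Fin N) K)) :=
    fun h => qFact_qq_ne_zero r (by simpa using congrArg PowerSeries.constantCoeff h)
  have h := mul_left_cancel₀ (mul_ne_zero hC hEser) ((hP r).trans (hP' r).symm)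
  simpa using congrArg (PowerSeries.coeff m) h

end QDeriv

lemma degree_eq_card_support_of_le_one {σ : Type*} {α : σ →₀ ℕ} (h : ∀ i, α i ≤ 1) :
    α.degree = #α.support := by
  rw [Finsupp.degree_apply, card_eq_sum_ones]
  refine sum_congr rfl fun i hi => ?_
  have := Finsupp.mem_support_iff.1 hi
  have := h i
  omega

section Exponents

variable {σ : Type*} [DecidableEq σ]

lemma sum_single_one_apply (t : Finset σ) (a : σ) :
    (∑ i ∈ t, Finsupp.single i 1 : σ →₀ ℕ) a = if a ∈ t then 1 else 0 := by
  simp [Finsupp.finsetSum_apply, Finsupp.single_apply]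

lemma sum_single_one_le_iff {t : Finset σ} {α : σ →₀ ℕ} :
    ∑ i ∈ t, Finsupp.single i 1 ≤ α ↔ t ⊆ α.support := by
  simp only [Finsupp.le_def, sum_single_one_apply, subset_iff, Finsupp.mem_support_iff]
  refine ⟨fun h i hi => ?_, fun h i => ?_⟩
  · have := h i; rw [if_pos hi] at this; omega
  · split_ifs with hi
    · have := h hi; omega
    · omega

lemma degree_sub_sum_single_one_add_card {t : Finset σ} {α : σ →₀ ℕ} (ht : t ⊆ α.support) :
    (α - ∑ i ∈ t, Finsupp.single i 1).degree + #t = α.degree := by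
  have hdeg : (∑ i ∈ t, Finsupp.single i 1 : σ →₀ ℕ).degree = #t := by simp [map_sum]
  rw [← hdeg, ← map_add, tsub_add_cancel_of_le (sum_single_one_le_iff.2 ht)]

end Exponents

lemma card_support_le_degree {σ : Type*} (α : σ →₀ ℕ) : #α.support ≤ α.degree := by
  classical
  have := degree_sub_sum_single_one_add_card (subset_refl α.support)
  omega

section Combinatorics

variable {σ : Type*} [DecidableEq σ] {R : Type*} [CommRing R]

lemma sum_powerset_neg_one_pow_degree_of_le_one {α : σ →₀ ℕ} (h : ∀ i, α i ≤ 1) (j : ℕ) :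
    ∑ t ∈ α.support.powerset, (-1 : R) ^ (α - ∑ i ∈ t, Finsupp.single i 1).degree *
        (if #(α - ∑ i ∈ t, Finsupp.single i 1).support = j then 1 else 0) =
      (-1) ^ j * ((#α.support).choose j : R) := by
  have hterm : ∀ t ∈ α.support.powerset, (-1 : R) ^ (α - ∑ i ∈ t, Finsupp.single i 1).degree *
      (if #(α - ∑ i ∈ t, Finsupp.single i 1).support = j then 1 else 0) =
      (-1) ^ (#α.support - #t) * (if #α.support - #t = j then 1 else 0) := by
    intro t ht
    have hdeg := degree_sub_sum_single_one_add_card (mem_powerset.1 ht)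
    rw [degree_eq_card_support_of_le_one h] at hdeg
    have hd : (α - ∑ i ∈ t, Finsupp.single i 1).degree = #α.support - #t := by omega
    rw [← degree_eq_card_support_of_le_one fun i => tsub_le_self.trans (h i), hd]
  rw [sum_congr rfl hterm, sum_powerset_apply_card (fun m => (-1 : R) ^ (#α.support - m) *
    (if #α.support - m = j then 1 else 0))]
  rcases le_or_gt j #α.support with hj | hj
  · rw [sum_eq_single (#α.support - j), if_pos (by omega), Nat.choose_symm hj,
      Nat.sub_sub_self hj, nsmul_eq_mul, mul_one, mul_comm]
    · intro m hm hne
      rw [mem_range] at hm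
      rw [if_neg (by omega), mul_zero, smul_zero]
    · exact fun hj' => absurd (mem_range.2 (by omega)) hj'
  · rw [Nat.choose_eq_zero_of_lt hj, Nat.cast_zero, mul_zero]
    refine sum_eq_zero fun m _ => ?_
    rw [if_neg (by omega), mul_zero, smul_zero]

lemma sum_powerset_neg_one_pow_degree_of_one_lt {α : σ →₀ ℕ} {a : σ} (ha : 1 < α a) (j : ℕ) :
    ∑ t ∈ α.support.powerset, (-1 : R) ^ (α - ∑ i ∈ t, Finsupp.single i 1).degree *
        (if #(α - ∑ i ∈ t, Finsupp.single i 1).support = j then 1 else 0) = 0 := by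
  have haS : a ∈ α.support := Finsupp.mem_support_iff.2 (by omega)
  rw [← insert_erase haS, sum_powerset_insert (notMem_erase a _), ← sum_add_distrib]
  refine sum_eq_zero fun t ht => ?_
  have htS : t ⊆ α.support := (mem_powerset.1 ht).trans (erase_subset a _)
  have hat : a ∉ t := fun h => by simpa using mem_powerset.1 ht h
  -- toggling `a` keeps `a` in the support (as `α a ≥ 2`) and changes the degree by one
  have hsupp : (α - ∑ i ∈ insert a t, Finsupp.single i 1).support =
      (α - ∑ i ∈ t, Finsupp.single i 1).support := by
    ext i
    simp only [Finsupp.mem_support_iff, Finsupp.tsub_apply, sum_single_one_apply, mem_insert]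
    by_cases hi : i = a
    · subst hi; simp only [hat, or_false, ↓reduceIte, ne_eq, tsub_zero]; omega
    · simp [hi]
  have hdeg := degree_sub_sum_single_one_add_card htS
  have hdeg' := degree_sub_sum_single_one_add_card (insert_subset haS htS)
  rw [card_insert_of_notMem hat] at hdeg'
  have hflip : (α - ∑ i ∈ t, Finsupp.single i 1).degree =
      (α - ∑ i ∈ insert a t, Finsupp.single i 1).degree + 1 := by omega
  rw [hsupp, hflip, pow_succ]
  ring

end Combinatorics

section SymmetricCoeff

variable {σ : Type*} [DecidableEq σ] {R : Type*} [CommSemiring R]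

lemma sum_single_one_eq_iff {t : Finset σ} {α : σ →₀ ℕ} :
    ∑ i ∈ t, Finsupp.single i 1 = α ↔ (∀ i, α i ≤ 1) ∧ α.support = t := by
  constructor
  · rintro rfl
    refine ⟨fun i => ?_, ?_⟩
    · rw [sum_single_one_apply]; split_ifs <;> omega
    · ext i; simp [Finsupp.mem_support_iff, sum_single_one_apply]
  · rintro ⟨h, rfl⟩
    ext i
    rw [sum_single_one_apply]
    split_ifs with hi
    · have := Finsupp.mem_support_iff.1 hi; have := h i; omega
    · exact (Finsupp.notMem_support_iff.1 hi).symm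

lemma coeff_esymm [Fintype σ] (n : ℕ) (α : σ →₀ ℕ) :
    coeff α (esymm σ R n) = if (∀ i, α i ≤ 1) ∧ #α.support = n then 1 else 0 := by
  simp only [esymm_eq_sum_monomial, coeff_sum, MvPolynomial.coeff_monomial, sum_single_one_eq_iff]
  by_cases h : ∀ i, α i ≤ 1 <;> simp [h]

lemma coeff_esymm_mul [Fintype σ] (a : ℕ) (f : MvPolynomial σ R) (α : σ →₀ ℕ) :
    coeff α (esymm σ R a * f) =
      ∑ t ∈ α.support.powersetCard a, coeff (α - ∑ i ∈ t, Finsupp.single i 1) f := by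
  simp only [esymm_eq_sum_monomial, sum_mul, coeff_sum, coeff_monomial_mul', one_mul]
  rw [← sum_filter]
  congr 1
  ext t
  simp [mem_powersetCard, sum_single_one_le_iff, and_comm]

lemma prod_map_X (m : Multiset σ) :
    ((m.map MvPolynomial.X).prod : MvPolynomial σ R) = monomial (Multiset.toFinsupp m) 1 := by
  induction m using Multiset.induction_on with
  | empty => simp
  | cons a s ih =>
    rw [Multiset.map_cons, Multiset.prod_cons, ih, MvPolynomial.X, monomial_mul, one_mul,
      ← Multiset.singleton_add, map_add, Multiset.toFinsupp_singleton]

end SymmetricCoeff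

lemma coeff_pnr {N : ℕ} (k j : ℕ) (α : Fin N →₀ ℕ) :
    coeff α (pnr N k j) = if α.degree = k ∧ #α.support = j then 1 else 0 := by
  have hpnr : pnr N k j = ∑ s : Sym (Fin N) k with (Nat.Partition.ofSym s).parts.card = j,
      monomial (Multiset.toFinsupp (s : Multiset (Fin N))) 1 := by
    rw [pnr]
    calc _ = ∑ μ : Nat.Partition k with μ.parts.card = j, ∑ s : Sym (Fin N) k with
          Nat.Partition.ofSym s = μ, monomial (Multiset.toFinsupp (s : Multiset (Fin N))) (1 : K) :=
          sum_congr rfl fun μ _ => by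
            simp only [← prod_map_X]
            exact (sum_subtype (p := fun s => Nat.Partition.ofSym s = μ) _ (fun s => by simp)
              fun s : Sym (Fin N) k => ((s : Multiset (Fin N)).map MvPolynomial.X).prod).symm
      _ = _ := by rw [sum_fiberwise_eq_sum_filter]; simp
  have hcard : Multiset.card α.toMultiset = α.degree := by
    simp [Finsupp.degree_apply, Finsupp.sum]
  rw [hpnr, coeff_sum]
  simp only [MvPolynomial.coeff_monomial, Multiset.toFinsupp_eq_iff]
  by_cases hα : α.degree = k
  · let s₀ : Sym (Fin N) k := ⟨α.toMultiset, hcard.trans hα⟩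
    have hs₀ : ∀ s : Sym (Fin N) k, (s : Multiset (Fin N)) = α.toMultiset ↔ s = s₀ :=
      fun s => ⟨fun h => Sym.coe_injective h, fun h => h ▸ rfl⟩
    simp only [hs₀, sum_ite_eq', mem_filter, mem_univ, true_and, hα]
    simp [s₀, Nat.Partition.ofSym, ← Multiset.card_toFinset]
  · rw [if_neg (fun h => hα h.1)]
    refine sum_eq_zero fun s _ => if_neg fun hs => hα ?_
    rw [← hcard, ← hs]
    exact s.2

lemma pnr_eq_zero_of_lt {N k j : ℕ} (h : k < j) : pnr N k j = 0 := by
  ext α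
  rw [coeff_pnr, MvPolynomial.coeff_zero, if_neg]
  rintro ⟨hk, hj⟩
  have := card_support_le_degree α
  omega

lemma sum_powersetCard_range_eq_sum_powerset {σ M : Type*} [AddCommMonoid M] {s : Finset σ}
    {n : ℕ} (hs : #s ≤ n) (g : Finset σ → M) :
    ∑ a ∈ range (n + 1), ∑ t ∈ s.powersetCard a, g t = ∑ t ∈ s.powerset, g t := by
  rw [sum_powerset]
  refine (sum_subset (range_subset_range.2 (by omega)) fun a _ ha => ?_).symm
  rw [powersetCard_eq_empty.2 (by simpa using ha), sum_empty]

theorem sum_antidiagonal_esymm_mul_pnr (N n j : ℕ) :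
    ∑ x ∈ antidiagonal n, MvPolynomial.C ((-1 : K) ^ x.2) * (esymm (Fin N) K x.1 * pnr N x.2 j) =
      MvPolynomial.C ((-1) ^ j * (n.choose j : K)) * esymm (Fin N) K n := by
  ext α
  simp only [MvPolynomial.coeff_sum, MvPolynomial.coeff_C_mul, coeff_esymm_mul, coeff_pnr,
    coeff_esymm, mul_sum]
  set g : Finset (Fin N) → K := fun t => (-1) ^ (α - ∑ i ∈ t, Finsupp.single i 1).degree *
    if #(α - ∑ i ∈ t, Finsupp.single i 1).support = j then 1 else 0
  have hterm : ∀ x ∈ antidiagonal n, ∀ t ∈ α.support.powersetCard x.1,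
      (-1 : K) ^ x.2 * (if (α - ∑ i ∈ t, Finsupp.single i 1).degree = x.2 ∧
        #(α - ∑ i ∈ t, Finsupp.single i 1).support = j then 1 else 0) =
      if α.degree = n then g t else 0 := by
    intro x hx t ht
    rw [HasAntidiagonal.mem_antidiagonal] at hx
    rw [mem_powersetCard] at ht
    have hdeg := degree_sub_sum_single_one_add_card ht.1
    by_cases hn : α.degree = n
    · have hk : (α - ∑ i ∈ t, Finsupp.single i 1).degree = x.2 := by omega
      simp only [g, hn, hk, true_and, if_true]
    · rw [if_neg hn, if_neg (by omega), mul_zero]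
  rw [sum_congr rfl fun x hx => sum_congr rfl (hterm x hx)]
  by_cases hn : α.degree = n
  · have hS : #α.support ≤ n := hn ▸ card_support_le_degree α
    simp only [if_pos hn]
    rw [Nat.sum_antidiagonal_eq_sum_range_succ (fun a _ => ∑ t ∈ α.support.powersetCard a, g t),
      sum_powersetCard_range_eq_sum_powerset hS]
    by_cases h1 : ∀ i, α i ≤ 1
    · have hcard : #α.support = n := (degree_eq_card_support_of_le_one h1).symm.trans hn
      rw [sum_powerset_neg_one_pow_degree_of_le_one h1, if_pos ⟨h1, hcard⟩, hcard, mul_one]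
    · obtain ⟨a, ha⟩ := not_forall.1 h1
      rw [sum_powerset_neg_one_pow_degree_of_one_lt (lt_of_not_ge ha), if_neg fun h => h1 h.1,
        mul_zero]
  · rw [if_neg fun h => hn ((degree_eq_card_support_of_le_one h.1).trans h.2), mul_zero]
    simp only [if_neg hn, sum_const_zero]

noncomputable def qStirlingExpansion (N n r : ℕ) : MvPolynomial (Fin N) K :=
  ∑ j ∈ Icc r n, MvPolynomial.C ((1 - qq) ^ (j - r) * qStirling2 qq j r) * pnr N n j

lemma qStirlingExpansion_eq_zero_of_lt {N k r : ℕ} (h : k < r) : qStirlingExpansion N k r = 0 := by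
  rw [qStirlingExpansion, Icc_eq_empty (by omega), sum_empty]

lemma qStirlingExpansion_eq_sum_range {N k n : ℕ} (r : ℕ) (hk : k ≤ n) :
    qStirlingExpansion N k r = ∑ j ∈ range (n + 1),
      MvPolynomial.C ((1 - qq) ^ (j - r) * qStirling2 qq j r) * pnr N k j := by
  refine sum_subset (fun j hj => by simp only [mem_Icc, mem_range] at hj ⊢; omega) fun j _ hj => ?_
  rcases lt_or_ge j r with hjr | hjr
  · rw [qStirling2_eq_zero_of_lt _ hjr, mul_zero, map_zero, zero_mul]
  · rw [pnr_eq_zero_of_lt (by simp only [mem_Icc, not_and, not_le] at hj; omega), mul_zero]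

lemma sum_antidiagonal_esymm_mul_qStirlingExpansion (N n r : ℕ) :
    ∑ x ∈ antidiagonal n,
        esymm (Fin N) K x.1 * ((-1) ^ (x.2 + r) * qStirlingExpansion N x.2 r) =
      MvPolynomial.C (∑ j ∈ range (n + 1), (n.choose j : K) *
        ((1 - qq) ^ (j - r) * qStirling2 qq j r * ((-1) ^ r * (-1) ^ j))) * esymm (Fin N) K n := by
  have hterm : ∀ x ∈ antidiagonal n,
      esymm (Fin N) K x.1 * ((-1) ^ (x.2 + r) * qStirlingExpansion N x.2 r) =
        ∑ j ∈ range (n + 1), MvPolynomial.C ((1 - qq) ^ (j - r) * qStirling2 qq j r * (-1) ^ r) *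
          (MvPolynomial.C ((-1) ^ x.2) * (esymm (Fin N) K x.1 * pnr N x.2 j)) := by
    intro x hx
    rw [HasAntidiagonal.mem_antidiagonal] at hx
    rw [qStirlingExpansion_eq_sum_range r (by omega : x.2 ≤ n), mul_sum, mul_sum]
    refine sum_congr rfl fun j _ => ?_
    simp only [map_mul, map_pow, map_neg, map_one]
    ring
  rw [sum_congr rfl hterm, sum_comm]
  simp only [← mul_sum, sum_antidiagonal_esymm_mul_pnr, map_sum, sum_mul]
  refine sum_congr rfl fun j _ => ?_
  simp only [map_mul, map_pow, map_neg, map_one, map_natCast]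
  ring

lemma PowerSeries.X_pow_mul_mk_add {R : Type*} [Semiring R] (r : ℕ) (g : ℕ → R)
    (hg : ∀ k < r, g k = 0) :
    PowerSeries.X ^ r * PowerSeries.mk (fun m => g (m + r)) = PowerSeries.mk g := by
  ext k
  rw [PowerSeries.coeff_X_pow_mul', PowerSeries.coeff_mk]
  split_ifs with h
  · rw [PowerSeries.coeff_mk, Nat.sub_add_cancel h]
  · rw [PowerSeries.coeff_mk, hg k (not_le.1 h)]

theorem isqAnalog_qStirlingExpansion {N : ℕ}
    {Dq : PowerSeries (MvPolynomial (Fin N) K) → PowerSeries (MvPolynomial (Fin N) K)}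
    (hDq : IsqDeriv N Dq) : IsqAnalog N Dq (qStirlingExpansion N) := by
  intro r
  refine mul_left_cancel₀ (pow_ne_zero r PowerSeries.X_ne_zero) ?_
  have hsign : (fun m => (-1 : MvPolynomial (Fin N) K) ^ m * qStirlingExpansion N (m + r) r) =
      fun m => (-1) ^ (m + r + r) * qStirlingExpansion N (m + r) r := by
    funext m
    rw [add_assoc, ← two_mul, pow_add, pow_mul, neg_one_sq, one_pow, mul_one]
  rw [mul_left_comm, hsign,
    PowerSeries.X_pow_mul_mk_add r (fun k => (-1) ^ (k + r) * qStirlingExpansion N k r)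
      fun k hk => by rw [qStirlingExpansion_eq_zero_of_lt hk, mul_zero]]
  ext n
  rw [hDq.coeff_X_pow_mul_iterate, mul_assoc, PowerSeries.coeff_C_mul, PowerSeries.coeff_mul]
  simp only [Eser, PowerSeries.coeff_mk]
  rw [sum_antidiagonal_esymm_mul_qStirlingExpansion, ← mul_assoc, ← map_mul,
    qFact_mul_sum_choose_mul_qStirling2_sign]

theorem qAnalog_eq_sum_qStirling_general (N n r : ℕ) (hrn : r ≤ n)
    (Dq : PowerSeries (MvPolynomial (Fin N) K) → PowerSeries (MvPolynomial (Fin N) K))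
    (hDq : IsqDeriv N Dq)
    (P : ℕ → ℕ → MvPolynomial (Fin N) K) (hP : IsqAnalog N Dq P) :
    P n r =
      ∑ j ∈ Finset.Icc r n,
        MvPolynomial.C ((1 - qq) ^ (j - r) * qStirling2 qq j r) * pnr N n j := by
  obtain ⟨m, rfl⟩ : ∃ m, n = m + r := ⟨n - r, by omega⟩
  exact hP.unique (isqAnalog_qStirlingExpansion hDq) m r

/-- for all `n ≥ r ≥ 1`,
`[p_n^{(r)}]_q = ∑_{j=r}^n (1−q)^{j−r} S_q[j,r] p_n^{(j)}`. -/
theorem qAnalog_eq_sum_qStirling (N n r : ℕ) (hN : n ≤ N) (hr : 1 ≤ r) (hrn : r ≤ n)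
    (Dq : PowerSeries (MvPolynomial (Fin N) K) → PowerSeries (MvPolynomial (Fin N) K))
    (hDq : IsqDeriv N Dq)
    (P : ℕ → ℕ → MvPolynomial (Fin N) K) (hP : IsqAnalog N Dq P) :
    P n r =
      ∑ j ∈ Finset.Icc r n,
        MvPolynomial.C ((1 - qq) ^ (j - r) * qStirling2 qq j r) * pnr N n j :=
  qAnalog_eq_sum_qStirling_general N n r hrn Dq hDq P hP
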